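/- Let 0 < r_k < 1 with r_k → 1 and define curves γ_k : [0,1] → 𝔻² by γ_k(t) = (r_k(2t-1)/(1-2r_k² t), 2t·r_k) for t ∈ [0,1/2] and γ_k(t) = (r_k(2t-1)/(1+r_k²(2t-2)), (2-2t)·r_k) for t ∈ [1/2, 1]. Then for every compact subset K of the open bidisc 𝔻² there exists k₀ such that γ_k([0,1]) ∩ K = ∅ for all k ≥ k₀. -/

import Mathlib

/-!
Both halves of the curve are, up to the sign of the first coordinate, `s ↦ (r (1 - s) / (1 - r² s), r s)`
with `s ∈ [0, 1]`. Along it the coordinate moduli cannot both stay below `c` once `2c < r (1 + c²)`.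
Since `ℂ × ℂ` carries the sup norm, a compact subset of the bidisc lies in a polydisc `‖z‖ < c` with
`c < 1`, and `2c / (1 + c²) < 1 = lim r_k`.
-/

/-- The explicit curves of Example 3.2: geodesic segments of the bidisc
joining `(-r_k, 0)` to `(r_k, 0)`. -/
noncomputable def bidiscCurve (r : ℝ) (t : ℝ) : ℂ × ℂ :=
  if t ≤ 1 / 2 then
    (((r * (2 * t - 1) / (1 - 2 * r ^ 2 * t) : ℝ) : ℂ), ((2 * t * r : ℝ) : ℂ))
  else
    (((r * (2 * t - 1) / (1 + r ^ 2 * (2 * t - 2) : ℝ) : ℝ) : ℂ),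
      (((2 - 2 * t) * r : ℝ) : ℂ))

lemma norm_bidiscCurve_eq {r t : ℝ} (ht : t ∈ Set.Icc (0 : ℝ) 1) :
    ∃ s ∈ Set.Icc (0 : ℝ) 1,
      ‖bidiscCurve r t‖ = max |r * (1 - s) / (1 - r ^ 2 * s)| |r * s| := by
  obtain ⟨ht0, ht1⟩ := ht
  by_cases hhalf : t ≤ 1 / 2
  · refine ⟨2 * t, ⟨by linarith, by linarith⟩, ?_⟩
    have hfirst : r * (2 * t - 1) / (1 - 2 * r ^ 2 * t)
        = -(r * (1 - 2 * t) / (1 - r ^ 2 * (2 * t))) := by ring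
    simp only [bidiscCurve, if_pos hhalf, Prod.norm_def, Complex.norm_real, Real.norm_eq_abs,
      hfirst, abs_neg, mul_comm (2 * t) r]
  · refine ⟨2 - 2 * t, ⟨by linarith, by linarith⟩, ?_⟩
    have hfirst : r * (2 * t - 1) / (1 + r ^ 2 * (2 * t - 2))
        = r * (1 - (2 - 2 * t)) / (1 - r ^ 2 * (2 - 2 * t)) := by ring
    simp only [bidiscCurve, if_neg hhalf, Prod.norm_def, Complex.norm_real, Real.norm_eq_abs,
      hfirst, mul_comm (2 - 2 * t) r]

lemma lt_max_abs_of_two_mul_lt {r c s : ℝ} (hr1 : r < 1) (hc0 : 0 ≤ c) (hc1 : c < 1)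
    (hrc : 2 * c < r * (1 + c ^ 2)) (hs : s ∈ Set.Icc (0 : ℝ) 1) :
    c < max |r * (1 - s) / (1 - r ^ 2 * s)| |r * s| := by
  obtain ⟨hs0, hs1⟩ := hs
  have hr0 : 0 < r := pos_of_mul_pos_left (by linarith) (by positivity : (0 : ℝ) ≤ 1 + c ^ 2)
  rcases lt_or_ge c (r * s) with hsc | hsc
  · exact lt_max_of_lt_right (hsc.trans_le (le_abs_self _))
  refine lt_max_of_lt_left (lt_of_lt_of_le ?_ (le_abs_self _))
  have hden : 0 < 1 - r ^ 2 * s := by nlinarith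
  rw [lt_div_iff₀ hden]
  -- `c (1 - r² s) - r (1 - s)` is increasing in `s`, and at `s = c / r` it equals `2c - r (1 + c²)`.
  have hslope : 0 ≤ r * (1 - c * r) := mul_nonneg hr0.le (by nlinarith)
  nlinarith [mul_le_mul_of_nonneg_left hsc hslope]

lemma lt_norm_bidiscCurve {r c t : ℝ} (hr1 : r < 1) (hc0 : 0 ≤ c) (hc1 : c < 1)
    (hrc : 2 * c / (1 + c ^ 2) < r) (ht : t ∈ Set.Icc (0 : ℝ) 1) :
    c < ‖bidiscCurve r t‖ := by
  obtain ⟨s, hs, hnorm⟩ := norm_bidiscCurve_eq (r := r) ht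
  rw [hnorm]
  exact lt_max_abs_of_two_mul_lt hr1 hc0 hc1 ((div_lt_iff₀ (by positivity)).1 hrc) hs

theorem bidisc_curves_leave_compacts_general (r : ℕ → ℝ)
    (hr1 : ∀ k, r k < 1)
    (hr : Filter.Tendsto r Filter.atTop (nhds 1))
    (K : Set (ℂ × ℂ)) (hK : IsCompact K)
    (hKsub : K ⊆ {z : ℂ × ℂ | ‖z.1‖ < 1 ∧ ‖z.2‖ < 1}) :
    ∃ k₀ : ℕ, ∀ k ≥ k₀, ∀ t ∈ Set.Icc (0:ℝ) 1, bidiscCurve (r k) t ∉ K := by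
  have hKball : K ⊆ Metric.ball 0 1 := fun z hz => by
    simpa [Prod.norm_def] using hKsub hz
  obtain ⟨c, ⟨hc0, hc1⟩, hKc⟩ := exists_pos_lt_subset_ball one_pos hK.isClosed hKball
  have hc : 2 * c / (1 + c ^ 2) < 1 := by
    rw [div_lt_one (by positivity)]
    nlinarith
  obtain ⟨k₀, hk₀⟩ := Filter.eventually_atTop.1 (hr.eventually (eventually_gt_nhds hc))
  refine ⟨k₀, fun k hk t ht hmem => ?_⟩
  have hnorm := lt_norm_bidiscCurve (hr1 k) hc0.le hc1 (hk₀ k hk) ht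
  exact (mem_ball_zero_iff.1 (hKc hmem)).not_gt hnorm

theorem bidisc_curves_leave_compacts (r : ℕ → ℝ)
    (hr0 : ∀ k, 0 < r k) (hr1 : ∀ k, r k < 1)
    (hr : Filter.Tendsto r Filter.atTop (nhds 1))
    (K : Set (ℂ × ℂ)) (hK : IsCompact K)
    (hKsub : K ⊆ {z : ℂ × ℂ | ‖z.1‖ < 1 ∧ ‖z.2‖ < 1}) :
    ∃ k₀ : ℕ, ∀ k ≥ k₀, ∀ t ∈ Set.Icc (0:ℝ) 1, bidiscCurve (r k) t ∉ K :=
  bidisc_curves_leave_compacts_general r hr1 hr K hK hKsub
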